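/- Let ψ^new = β * ψ as above (β multiplicative with β(p) = -2, β(p²) = 1, β(p^r) = 0 for r ≥ 3; ψ the Dedekind psi function). Then for all N ≥ 1, 1/ψ^new(N) ≤ 12.033 / N^{63/64}. -/

import Mathlib

/-!
Write `χ = β * ψ`. It is multiplicative, `χ(p) = p - 1`, and the vanishing of `β` beyond `p²`
gives `χ(p^(j+2)) = ψ(p^(j+2)) - 2ψ(p^(j+1)) + ψ(p^j) ≥ p^j (p² - p - 1)`. Hence
`(p^k)^(63/64) ≤ c_p χ(p^k)` for an explicit constant `c_p`, which equals `1` once `p ≥ 23`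
because `p^63 ≤ (p - 1)^64` there (an induction driven by `(a + 2) a ≤ (a + 1)²`).
Multiplying over the prime powers of `N` gives `N^(63/64) ≤ (∏_{p ∣ N} c_p) χ(N)`,
and `∏_p c_p ≤ 12.033`.
-/

open ArithmeticFunction Finset

namespace ArithmeticFunction

theorem mul_apply_prime_pow {R : Type*} [Semiring R] (f g : ArithmeticFunction R) {p : ℕ}
    (hp : p.Prime) (k : ℕ) :
    (f * g) (p ^ k) = ∑ i ∈ range (k + 1), f (p ^ i) * g (p ^ (k - i)) := by
  rw [mul_apply, Nat.sum_divisorsAntidiagonal (f := fun x y => f x * g y),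
    Nat.sum_divisors_prime_pow hp]
  refine sum_congr rfl fun i hi => ?_
  rw [Nat.pow_div (Nat.lt_succ_iff.mp (mem_range.mp hi)) hp.pos]

theorem IsMultiplicative.rpow_le_prod_mul {f : ArithmeticFunction ℝ} (hf : f.IsMultiplicative)
    {c : ℕ → ℝ} {a : ℝ}
    (h : ∀ p k : ℕ, p.Prime → k ≠ 0 → ((p ^ k : ℕ) : ℝ) ^ a ≤ c p * f (p ^ k))
    {N : ℕ} (hN : N ≠ 0) :
    (N : ℝ) ^ a ≤ (∏ p ∈ N.primeFactors, c p) * f N := by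
  have hfN : f N = ∏ p ∈ N.primeFactors, f (p ^ N.factorization p) := by
    rw [hf.multiplicative_factorization f hN, Finsupp.prod, Nat.support_factorization]
  have hN' : (N : ℝ) = ∏ p ∈ N.primeFactors, ((p ^ N.factorization p : ℕ) : ℝ) := by
    conv_lhs => rw [← Nat.prod_factorization_pow_eq_self hN]
    rw [Finsupp.prod, Nat.support_factorization, Nat.cast_prod]
  rw [hfN, ← prod_mul_distrib, hN', ← Real.finsetProd_rpow _ _ (fun _ _ => by positivity)]
  exact prod_le_prod (fun _ _ => by positivity) fun p hp =>
    h p _ (Nat.prime_of_mem_primeFactors hp)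
      (Nat.pos_iff_ne_zero.mp (Nat.Prime.factorization_pos_of_dvd
        (Nat.prime_of_mem_primeFactors hp) hN (Nat.dvd_of_mem_primeFactors hp)))

end ArithmeticFunction

theorem rpow_div_le_of_pow_le {x y : ℝ} (hx : 0 ≤ x) (hy : 0 ≤ y) {m n : ℕ} (hn : n ≠ 0)
    (h : x ^ m ≤ y ^ n) : x ^ ((m : ℝ) / n) ≤ y := by
  rw [div_eq_mul_inv, Real.rpow_mul hx, Real.rpow_natCast]
  calc (x ^ m) ^ (n⁻¹ : ℝ) ≤ (y ^ n) ^ (n⁻¹ : ℝ) := by gcongr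
    _ = y := Real.pow_rpow_inv_natCast hy hn

theorem add_two_pow_le_of_add_one_pow_le {a n : ℕ} (h : (a + 1) ^ n ≤ a ^ (n + 1)) :
    (a + 2) ^ n ≤ (a + 1) ^ (n + 1) := by
  have hsq : (a + 2) * a ≤ (a + 1) ^ 2 := by nlinarith
  refine Nat.le_of_mul_le_mul_right (c := (a + 1) ^ n) ?_ (by positivity)
  calc (a + 2) ^ n * (a + 1) ^ n ≤ (a + 2) ^ n * a ^ (n + 1) := Nat.mul_le_mul_left _ h
    _ = ((a + 2) * a) ^ n * a := by rw [pow_succ, mul_pow, mul_assoc]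
    _ ≤ ((a + 1) ^ 2) ^ n * (a + 1) := by gcongr; omega
    _ = (a + 1) ^ (n + 1) * (a + 1) ^ n := by rw [← pow_mul]; ring

theorem add_one_pow_63_le_pow_64 {a : ℕ} (ha : 22 ≤ a) : (a + 1) ^ 63 ≤ a ^ 64 := by
  induction a, ha using Nat.le_induction with
  | base => norm_num
  | succ a _ ih => exact add_two_pow_le_of_add_one_pow_le ih

theorem pow_63_le_sub_one_pow_64 {p : ℕ} (hp : 23 ≤ p) : (p : ℝ) ^ 63 ≤ ((p : ℝ) - 1) ^ 64 := by
  obtain ⟨a, rfl⟩ : ∃ a, p = a + 1 := ⟨p - 1, by omega⟩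
  have := add_one_pow_63_le_pow_64 (a := a) (by omega)
  push_cast
  simpa using (show ((a + 1 : ℕ) : ℝ) ^ 63 ≤ (a : ℝ) ^ 64 by exact_mod_cast this)

/-- Rational upper bounds for `max (p^(63/64) / (p - 1)) (p^(63/32) / (p² - p - 1))`, the cases
`k = 1, 2` of `(p^k)^(63/64) / χ(p^k)`; their product is about `11.74`. -/
noncomputable def smallPrimeConst : ℕ → ℝ
  | 2 => 4
  | 3 => 7 / 4
  | 5 => 63 / 50
  | 7 => 23 / 20
  | 11 => 107 / 100
  | 13 => 21 / 20
  | 17 => 51 / 50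
  | 19 => 101 / 100
  | _ => 1

theorem one_le_smallPrimeConst (p : ℕ) : 1 ≤ smallPrimeConst p := by
  unfold smallPrimeConst; split <;> norm_num

theorem smallPrimeConst_eq_one {p : ℕ} (hp : 20 ≤ p) : smallPrimeConst p = 1 := by
  unfold smallPrimeConst; split <;> first | rfl | omega

theorem prod_smallPrimeConst_le (s : Finset ℕ) : ∏ p ∈ s, smallPrimeConst p ≤ 12.033 := by
  classical
  calc ∏ p ∈ s, smallPrimeConst p = ∏ p ∈ s ∩ range 20, smallPrimeConst p :=
        (prod_subset inter_subset_left fun p hps hp =>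
          smallPrimeConst_eq_one (by simp_all)).symm
    _ ≤ ∏ p ∈ range 20, smallPrimeConst p :=
        prod_le_prod_of_subset_of_one_le inter_subset_right
          (fun p _ => zero_le_one.trans (one_le_smallPrimeConst p))
          fun p _ _ => one_le_smallPrimeConst p
    _ ≤ 12.033 := by norm_num [prod_range_succ, smallPrimeConst]

theorem pow_le_smallPrimeConst_mul_pow {p : ℕ} (hp : p.Prime) :
    (p : ℝ) ^ 63 ≤ (smallPrimeConst p * (p - 1)) ^ 64 ∧
      ((p : ℝ) ^ 2) ^ 63 ≤ (smallPrimeConst p * (p ^ 2 - p - 1)) ^ 64 := by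
  by_cases hp23 : p < 23
  · interval_cases p <;> revert hp <;> norm_num [smallPrimeConst]
  have h1 := pow_63_le_sub_one_pow_64 (p := p) (by omega)
  have hp' : (23 : ℝ) ≤ p := by exact_mod_cast not_lt.mp hp23
  rw [smallPrimeConst_eq_one (by omega), one_mul, one_mul]
  refine ⟨h1, ?_⟩
  calc ((p : ℝ) ^ 2) ^ 63 = ((p : ℝ) ^ 63) ^ 2 := by ring
    _ ≤ (((p : ℝ) - 1) ^ 64) ^ 2 := by gcongr
    _ = (((p : ℝ) - 1) ^ 2) ^ 64 := by ring
    _ ≤ ((p : ℝ) ^ 2 - p - 1) ^ 64 := by gcongr; nlinarith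

section BetaPsi

variable {β ψ : ArithmeticFunction ℤ} {p : ℕ} (hβ : β.IsMultiplicative)
  (hβ1 : ∀ p : ℕ, p.Prime → β p = -2) (hβ2 : ∀ p : ℕ, p.Prime → β (p ^ 2) = 1)
  (hβ3 : ∀ p r : ℕ, p.Prime → 3 ≤ r → β (p ^ r) = 0) (hψ : ψ.IsMultiplicative)
  (hψp : ∀ p r : ℕ, p.Prime → 1 ≤ r → ψ (p ^ r) = (p : ℤ) ^ r + (p : ℤ) ^ (r - 1))

include hψ hψp in
theorem pow_le_apply_prime_pow (hp : p.Prime) (j : ℕ) : (p : ℤ) ^ j ≤ ψ (p ^ j) := by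
  rcases Nat.eq_zero_or_pos j with rfl | hj
  · simp [hψ.map_one]
  · rw [hψp p j hp hj]
    have : (0 : ℤ) ≤ (p : ℤ) ^ (j - 1) := by positivity
    linarith

include hβ hβ1 hψ hψp in
theorem mul_apply_prime_eq_sub_one (hp : p.Prime) : (β * ψ) p = p - 1 := by
  have h := mul_apply_prime_pow β ψ hp 1
  have hψ1 : ψ p = p + 1 := by simpa using hψp p 1 hp le_rfl
  simp only [pow_one, sum_range_succ, sum_range_zero, pow_zero, Nat.sub_zero, Nat.sub_self,
    hβ.map_one, hψ.map_one, hβ1 p hp, hψ1] at h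
  linarith

include hβ hβ1 hβ2 hβ3 in
theorem mul_apply_prime_pow_add_two (hp : p.Prime) (j : ℕ) :
    (β * ψ) (p ^ (j + 2)) = ψ (p ^ (j + 2)) - 2 * ψ (p ^ (j + 1)) + ψ (p ^ j) := by
  rw [mul_apply_prime_pow β ψ hp, sum_range_succ', sum_range_succ', sum_range_succ']
  rw [sum_eq_zero fun i _ => by rw [hβ3 p (i + 3) hp (by omega), zero_mul]]
  simp only [zero_add, pow_one, pow_zero, Nat.sub_zero, hβ.map_one, hβ1 p hp, hβ2 p hp]
  rw [show j + 2 - (0 + 1 + 1) = j by omega, show j + 2 - (0 + 1) = j + 1 by omega]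
  ring

include hβ hβ1 hβ2 hβ3 hψ hψp in
theorem pow_mul_le_mul_apply_prime_pow_add_two (hp : p.Prime) (j : ℕ) :
    (p : ℤ) ^ j * (p ^ 2 - p - 1) ≤ (β * ψ) (p ^ (j + 2)) := by
  rw [mul_apply_prime_pow_add_two hβ hβ1 hβ2 hβ3 hp, hψp p (j + 2) hp (by omega),
    hψp p (j + 1) hp (by omega), show j + 2 - 1 = j + 1 by omega, Nat.add_sub_cancel]
  linear_combination pow_le_apply_prime_pow hψ hψp hp j

include hβ hβ1 hβ2 hβ3 hψ hψp in
theorem prime_pow_rpow_le_smallPrimeConst_mul (hp : p.Prime) {k : ℕ} (hk : k ≠ 0) :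
    ((p ^ k : ℕ) : ℝ) ^ ((63 : ℝ) / 64) ≤ smallPrimeConst p * ((β * ψ) (p ^ k) : ℝ) := by
  obtain ⟨hprime, hsquare⟩ := pow_le_smallPrimeConst_mul_pow hp
  have hc := one_le_smallPrimeConst p
  have hp2 : (2 : ℝ) ≤ p := by exact_mod_cast hp.two_le
  have hquad : 0 < (p : ℝ) ^ 2 - p - 1 := by nlinarith
  rcases k with _ | _ | j
  · contradiction
  · rw [pow_one, mul_apply_prime_eq_sub_one hβ hβ1 hψ hψp hp]
    push_cast
    simpa using rpow_div_le_of_pow_le (by positivity) (by nlinarith) (by norm_num) hprime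
  · have hlow : (p : ℝ) ^ j * (p ^ 2 - p - 1) ≤ ((β * ψ) (p ^ (j + 2)) : ℝ) := by
      exact_mod_cast pow_mul_le_mul_apply_prime_pow_add_two hβ hβ1 hβ2 hβ3 hψ hψp hp j
    calc ((p ^ (j + 2) : ℕ) : ℝ) ^ ((63 : ℝ) / 64)
        = ((p : ℝ) ^ 2) ^ ((63 : ℝ) / 64) * ((p : ℝ) ^ j) ^ ((63 : ℝ) / 64) := by
          push_cast
          rw [pow_add, mul_comm, Real.mul_rpow (by positivity) (by positivity)]
      _ ≤ (smallPrimeConst p * (p ^ 2 - p - 1)) * (p : ℝ) ^ j := by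
          gcongr
          · simpa using
              rpow_div_le_of_pow_le (by positivity) (by positivity) (by norm_num) hsquare
          · apply Real.rpow_le_self_of_one_le (one_le_pow₀ (by linarith))
            norm_num
      _ = smallPrimeConst p * ((p : ℝ) ^ j * (p ^ 2 - p - 1)) := by ring
      _ ≤ smallPrimeConst p * ((β * ψ) (p ^ (j + 2)) : ℝ) := by gcongr

end BetaPsi

theorem stmt_13 (β ψ : ArithmeticFunction ℤ)
    (hβ : β.IsMultiplicative)
    (hβ1 : ∀ p : ℕ, p.Prime → β p = -2)
    (hβ2 : ∀ p : ℕ, p.Prime → β (p ^ 2) = 1)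
    (hβ3 : ∀ p r : ℕ, p.Prime → 3 ≤ r → β (p ^ r) = 0)
    (hψ : ψ.IsMultiplicative)
    (hψp : ∀ p r : ℕ, p.Prime → 1 ≤ r → ψ (p ^ r) = (p : ℤ) ^ r + (p : ℤ) ^ (r - 1)) :
    ∀ N : ℕ, 1 ≤ N →
      1 / (((β * ψ) N : ℤ) : ℝ) ≤ 12.033 / (N : ℝ) ^ ((63 : ℝ) / 64) := by
  intro N hN
  have hbound : (N : ℝ) ^ ((63 : ℝ) / 64) ≤
      (∏ p ∈ N.primeFactors, smallPrimeConst p) * ((β * ψ) N : ℝ) := by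
    simpa using (hβ.mul hψ).intCast.rpow_le_prod_mul (fun p k hp hk => by
      simpa using prime_pow_rpow_le_smallPrimeConst_mul hβ hβ1 hβ2 hβ3 hψ hψp hp hk)
      (by omega : N ≠ 0)
  have hNpos : 0 < (N : ℝ) ^ ((63 : ℝ) / 64) := by positivity
  have hprod := prod_smallPrimeConst_le N.primeFactors
  have hprod_nonneg : 0 ≤ ∏ p ∈ N.primeFactors, smallPrimeConst p :=
    prod_nonneg fun p _ => zero_le_one.trans (one_le_smallPrimeConst p)
  have hχpos : (0 : ℝ) < (β * ψ) N := pos_of_mul_pos_right (hNpos.trans_le hbound) hprod_nonneg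
  rw [div_le_div_iff₀ hχpos hNpos, one_mul]
  exact hbound.trans (by gcongr)
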